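/- Fix reals ω₀ > 0, γ > 0, θ > 0. For an integer m set β := 2πm/θ and let Θ_m(c, c') := 4γ (4γ + iβ)^{−1} · { 1 + 2 (4γ + iβ)^{−1} [c + c' + (2γ + iβ)(iβ/2)]^{−1} ( [2(2γ + iβ)]^{−1} (c − c')² + (iβ/2)(c + c') ) }^{−1} (for m = 0 this reduces to Θ(c,c') = [1 + (c − c')²/(8γ²(c + c'))]^{−1}), and for an integer n ≥ 1 define M_{x,y}(m) = Σ_{j,j'=0}^n Θ_m(μ_j, μ_{j'}) ψ_j(x) ψ_{j'}(x) ψ_j(y) ψ_{j'}(y), where μ_j = ω₀² + 4 sin²(π j/(2(n+1))) and ψ_j(x) = ((2 − δ_{0,j})/(n+1))^{1/2} cos(π j (2x+1)/(2(n+1))). Then there exists a constant 𝔐 > 0, depending only on γ, θ and ω₀, such that for all n ≥ 1 and all m ∈ ℤ: Σ_{x=0}^n |M_{x,0}(m)|² ≤ 𝔐². -/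

import Mathlib

open Real

noncomputable section

/-- The `m`-th time-Fourier symbol `Θ_m(c, c')` of the memory kernel, with `β = 2πm/θ`
(for `m = 0` it reduces to `Θ(c,c') = [1 + (c−c')²/(8γ²(c+c'))]⁻¹`). -/
def thetaM (γ θ : ℝ) (m : ℤ) (c c' : ℝ) : ℂ :=
  let β : ℂ := ((2 * π * m / θ : ℝ) : ℂ)
  (4 * (γ : ℂ)) * (4 * (γ : ℂ) + Complex.I * β)⁻¹ *
    (1 + 2 * (4 * (γ : ℂ) + Complex.I * β)⁻¹ *
        ((c : ℂ) + (c' : ℂ) + (2 * (γ : ℂ) + Complex.I * β) * (Complex.I * β / 2))⁻¹ *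
        ((2 * (2 * (γ : ℂ) + Complex.I * β))⁻¹ * ((c : ℂ) - (c' : ℂ)) ^ 2
          + (Complex.I * β / 2) * ((c : ℂ) + (c' : ℂ))))⁻¹

/-- The Neumann eigenvalues shifted by the pinning: `μ_j = ω₀² + 4 sin²(πj/(2(n+1)))`. -/
def muN (n : ℕ) (ω₀ : ℝ) (j : ℕ) : ℝ :=
  ω₀ ^ 2 + 4 * Real.sin (π * j / (2 * (n + 1))) ^ 2

/-- The Neumann eigenvectors `ψ_j(x) = ((2 − δ_{0,j})/(n+1))^{1/2} cos(πj(2x+1)/(2(n+1)))`. -/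
def psiN (n j x : ℕ) : ℝ :=
  Real.sqrt ((2 - if j = 0 then 1 else 0) / (n + 1)) *
    Real.cos (π * j * (2 * x + 1) / (2 * (n + 1)))

/-- The `m`-th Fourier-mode kernel
`M_{x,y}(m) = Σ_{j,j'} Θ_m(μ_j, μ_{j'}) ψ_j(x) ψ_{j'}(x) ψ_j(y) ψ_{j'}(y)`. -/
def kerMC (n : ℕ) (ω₀ γ θ : ℝ) (m : ℤ) (x y : ℕ) : ℂ :=
  ∑ j ∈ Finset.range (n + 1), ∑ j' ∈ Finset.range (n + 1),
    thetaM γ θ m (muN n ω₀ j) (muN n ω₀ j') *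
      ((psiN n j x * psiN n j' x * psiN n j y * psiN n j' y : ℝ) : ℂ)

/-!
For positive arguments the symbol satisfies `‖Θ_m(c, c')‖ ≤ 1`: clearing denominators writes it as
`num / den` with `|den|² - |num|²` an explicit sum of nonnegative terms. Then
`M_{x,0} = Σ_j ψ_j(0) ψ_j(x) g_j(x)` with `g_j = Σ_{j'} Θ_m(μ_j, μ_{j'}) ψ_{j'}(0) ψ_{j'}`, so
Cauchy–Schwarz in `j`, the uniform bound `ψ_j(x)² ≤ 2/(n+1)` and Parseval for each `g_j` give
`Σ_x |M_{x,0}(m)|² ≤ 2 (Σ_j ψ_j(0)²)² ≤ 8`.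
-/

open Finset

lemma norm_sum_smul_sq_le {ι E : Type*} [SeminormedAddCommGroup E] [NormedSpace ℝ E]
    (t : Finset ι) (u : ι → ℝ) (w : ι → E) :
    ‖∑ j ∈ t, u j • w j‖ ^ 2 ≤ (∑ j ∈ t, u j ^ 2) * ∑ j ∈ t, ‖w j‖ ^ 2 := by
  calc ‖∑ j ∈ t, u j • w j‖ ^ 2 ≤ (∑ j ∈ t, |u j| * ‖w j‖) ^ 2 := by
        gcongr
        exact (norm_sum_le _ _).trans_eq (by simp only [norm_smul, Real.norm_eq_abs])
    _ ≤ (∑ j ∈ t, |u j| ^ 2) * ∑ j ∈ t, ‖w j‖ ^ 2 := sum_mul_sq_le_sq_mul_sq _ _ _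
    _ = (∑ j ∈ t, u j ^ 2) * ∑ j ∈ t, ‖w j‖ ^ 2 := by simp only [sq_abs]

section Orthonormal

variable {ι X : Type*} [DecidableEq ι] {s : Finset X} {t : Finset ι} {ψ : ι → X → ℝ}

lemma sum_norm_sq_sum_mul_of_orthonormal
    (horth : ∀ a ∈ t, ∀ b ∈ t, ∑ x ∈ s, ψ a x * ψ b x = if a = b then 1 else 0) (r : ι → ℂ) :
    ∑ x ∈ s, ‖∑ j ∈ t, r j * ψ j x‖ ^ 2 = ∑ j ∈ t, ‖r j‖ ^ 2 := by
  have hpair : ∀ a ∈ t, ∀ b ∈ t, ∑ x ∈ s, r a * ψ a x * (starRingEnd ℂ (r b) * ψ b x)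
      = if a = b then r a * starRingEnd ℂ (r b) else 0 := fun a ha b hb => by
    rw [show (fun x => r a * ψ a x * (starRingEnd ℂ (r b) * ψ b x))
        = fun x => r a * starRingEnd ℂ (r b) * ((ψ a x * ψ b x : ℝ) : ℂ) by ext; push_cast; ring,
      ← mul_sum, ← Complex.ofReal_sum, horth a ha b hb]
    split_ifs <;> simp
  apply Complex.ofReal_injective
  push_cast
  simp only [← Complex.mul_conj', map_sum, map_mul, Complex.conj_ofReal, sum_mul_sum]
  rw [sum_comm]
  refine sum_congr rfl fun a ha => ?_
  rw [sum_comm, sum_congr rfl (hpair a ha), sum_ite_eq, if_pos ha]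

lemma sum_norm_sq_kernel_column_le
    (horth : ∀ a ∈ t, ∀ b ∈ t, ∑ x ∈ s, ψ a x * ψ b x = if a = b then 1 else 0)
    {B : ℝ} (hB : 0 ≤ B) (hψ : ∀ j ∈ t, ∀ x, ψ j x ^ 2 ≤ B)
    {Θ : ι → ι → ℂ} (hΘ : ∀ j ∈ t, ∀ j' ∈ t, ‖Θ j j'‖ ≤ 1) (y : X) :
    ∑ x ∈ s, ‖∑ j ∈ t, ∑ j' ∈ t, Θ j j' * ((ψ j x * ψ j' x * ψ j y * ψ j' y : ℝ) : ℂ)‖ ^ 2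
      ≤ (#t * B) ^ 3 := by
  set A := ∑ j ∈ t, ψ j y ^ 2
  set g : ι → X → ℂ := fun j x => ∑ j' ∈ t, Θ j j' * ψ j' y * ψ j' x
  have hA : A ≤ #t * B := (sum_le_sum fun j hj => hψ j hj y).trans_eq (by simp)
  have hfactor : ∀ x, ∑ j ∈ t, ∑ j' ∈ t, Θ j j' * ((ψ j x * ψ j' x * ψ j y * ψ j' y : ℝ) : ℂ)
      = ∑ j ∈ t, ψ j y • ((ψ j x : ℂ) * g j x) := fun x => by
    refine sum_congr rfl fun j _ => ?_
    simp only [g, mul_sum, smul_sum, Complex.real_smul]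
    refine sum_congr rfl fun j' _ => ?_
    push_cast
    ring
  have hpoint : ∀ x ∈ s, ‖∑ j ∈ t, ψ j y • ((ψ j x : ℂ) * g j x)‖ ^ 2
      ≤ A * (B * ∑ j ∈ t, ‖g j x‖ ^ 2) := fun x _ => by
    refine (norm_sum_smul_sq_le _ _ _).trans (mul_le_mul_of_nonneg_left ?_ (by positivity))
    rw [mul_sum]
    refine sum_le_sum fun j hj => ?_
    rw [norm_mul, mul_pow, Complex.norm_real, Real.norm_eq_abs, sq_abs]
    exact mul_le_mul_of_nonneg_right (hψ j hj x) (by positivity)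
  have hparseval : ∀ j ∈ t, ∑ x ∈ s, ‖g j x‖ ^ 2 ≤ A := fun j hj => by
    rw [sum_norm_sq_sum_mul_of_orthonormal horth]
    refine sum_le_sum fun j' hj' => ?_
    rw [norm_mul, mul_pow, Complex.norm_real, Real.norm_eq_abs, sq_abs]
    exact mul_le_of_le_one_left (sq_nonneg _) (pow_le_one₀ (norm_nonneg _) (hΘ j hj j' hj'))
  calc _ ≤ ∑ x ∈ s, A * (B * ∑ j ∈ t, ‖g j x‖ ^ 2) := by
        simp only [hfactor]
        exact sum_le_sum hpoint
    _ = A * B * ∑ j ∈ t, ∑ x ∈ s, ‖g j x‖ ^ 2 := by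
        rw [← mul_sum, ← mul_sum, sum_comm, mul_assoc]
    _ ≤ A * B * ∑ j ∈ t, A := by gcongr with j hj; exact hparseval j hj
    _ = #t * B * A ^ 2 := by rw [sum_const, nsmul_eq_mul]; ring
    _ ≤ (#t * B) ^ 3 := by
        have : 0 ≤ A := by positivity
        rw [pow_succ' _ 2]
        gcongr

end Orthonormal

lemma two_mul_sin_mul_sum_range_cos_odd (N : ℕ) (φ : ℝ) :
    2 * sin φ * ∑ x ∈ range N, cos ((2 * x + 1) * φ) = sin (2 * N * φ) := by
  induction N with
  | zero => simp
  | succ N ih =>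
    rw [sum_range_succ, mul_add, ih, two_mul_sin_mul_cos,
      show φ - (2 * N + 1) * φ = -(2 * N * φ) by ring, sin_neg]
    push_cast
    ring_nf

lemma sum_range_cos_odd (n k : ℕ) (hk : k < 2 * (n + 1)) :
    ∑ x ∈ range (n + 1), cos (π * k * (2 * x + 1) / (2 * (n + 1))) =
      if k = 0 then (n + 1 : ℝ) else 0 := by
  split_ifs with hk0
  · simp [hk0]
  set φ := π * k / (2 * (n + 1)) with hφ_def
  have hφ : 0 < φ ∧ φ < π := by
    have hk' : (k : ℝ) < 2 * (n + 1) := by exact_mod_cast hk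
    have : (0 : ℝ) < k := by exact_mod_cast Nat.pos_of_ne_zero hk0
    refine ⟨by positivity, ?_⟩
    rw [div_lt_iff₀ (by positivity)]
    nlinarith [pi_pos]
  have htel := two_mul_sin_mul_sum_range_cos_odd (n + 1) φ
  rw [show 2 * ((n + 1 : ℕ) : ℝ) * φ = k * π by rw [hφ_def]; push_cast; field_simp,
    sin_nat_mul_pi] at htel
  have hsin : 2 * sin φ ≠ 0 := by have := sin_pos_of_pos_of_lt_pi hφ.1 hφ.2; positivity
  convert (mul_eq_zero.1 htel).resolve_left hsin using 3 with x
  rw [hφ_def]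
  ring

lemma sum_psiN_mul_psiN_of_le {n a b : ℕ} (ha : a ≤ n) (hba : b ≤ a) :
    ∑ x ∈ range (n + 1), psiN n a x * psiN n b x = if a = b then 1 else 0 := by
  set w : ℕ → ℝ := fun j => (2 - if j = 0 then 1 else 0) / (n + 1) with hw
  have hprod : ∀ x : ℕ, psiN n a x * psiN n b x = √(w a) * √(w b) / 2 *
      (cos (π * (a - b : ℕ) * (2 * x + 1) / (2 * (n + 1)))
        + cos (π * (a + b : ℕ) * (2 * x + 1) / (2 * (n + 1)))) := fun x => by
    have h := two_mul_cos_mul_cos (π * a * (2 * x + 1) / (2 * (n + 1)))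
      (π * b * (2 * x + 1) / (2 * (n + 1)))
    rw [show π * a * (2 * x + 1) / (2 * (n + 1)) - π * b * (2 * x + 1) / (2 * (n + 1))
        = π * (a - b : ℕ) * (2 * x + 1) / (2 * (n + 1)) by rw [Nat.cast_sub hba]; ring,
      show π * a * (2 * x + 1) / (2 * (n + 1)) + π * b * (2 * x + 1) / (2 * (n + 1))
        = π * (a + b : ℕ) * (2 * x + 1) / (2 * (n + 1)) by push_cast; ring] at h
    rw [psiN, psiN]
    linear_combination (√(w a) * √(w b) / 2) * h
  simp only [hprod, ← mul_sum, sum_add_distrib]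
  rw [sum_range_cos_odd n _ (by omega), sum_range_cos_odd n _ (by omega)]
  rcases eq_or_lt_of_le hba with rfl | hlt
  · have hwb : 0 ≤ w b := by simp only [hw]; split_ifs <;> positivity
    rw [mul_self_sqrt hwb]
    simp only [hw, Nat.sub_self, if_true, ← two_mul, mul_eq_zero, two_ne_zero, false_or]
    split_ifs <;> field_simp <;> ring
  · rw [if_neg (Nat.sub_ne_zero_of_lt hlt), if_neg (by omega), if_neg hlt.ne']
    ring

lemma sum_psiN_mul_psiN {n a b : ℕ} (ha : a ≤ n) (hb : b ≤ n) :
    ∑ x ∈ range (n + 1), psiN n a x * psiN n b x = if a = b then 1 else 0 := by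
  rcases le_total b a with hba | hab
  · exact sum_psiN_mul_psiN_of_le ha hba
  · simp only [mul_comm (psiN n a _), sum_psiN_mul_psiN_of_le hb hab, eq_comm]

lemma psiN_sq_le (n j x : ℕ) : psiN n j x ^ 2 ≤ 2 / (n + 1) := by
  have hw : 0 ≤ (2 - if j = 0 then (1 : ℝ) else 0) / (n + 1) := by split_ifs <;> positivity
  rw [psiN, mul_pow, sq_sqrt hw]
  calc _ ≤ (2 - if j = 0 then (1 : ℝ) else 0) / (n + 1) * 1 := by gcongr; exact cos_sq_le_one _
    _ ≤ 2 / (n + 1) := by rw [mul_one]; gcongr; split_ifs <;> norm_num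

lemma muN_pos (n : ℕ) {ω₀ : ℝ} (hω : 0 < ω₀) (j : ℕ) : 0 < muN n ω₀ j := by
  unfold muN
  positivity

open Complex in
def thetaNum (γ β c c' : ℝ) : ℂ :=
  4 * γ * (2 * γ + I * β) * (2 * (c + c') + (2 * γ + I * β) * (I * β))

open Complex in
def thetaDen (γ β c c' : ℝ) : ℂ :=
  thetaNum γ β c c' + (2 * γ + I * β) * (I * β) * (4 * (c + c') + (2 * γ + I * β) * (I * β))
    + 2 * ((c : ℂ) - c') ^ 2

lemma symbol_eq_div_of_ne_zero {K : Type*} [Field K] [CharZero K] {g z c c' : K}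
    (hA : 4 * g + z ≠ 0) (hE : 2 * g + z ≠ 0) (hP : c + c' + (2 * g + z) * (z / 2) ≠ 0) :
    4 * g * (4 * g + z)⁻¹ * (1 + 2 * (4 * g + z)⁻¹ * (c + c' + (2 * g + z) * (z / 2))⁻¹ *
        ((2 * (2 * g + z))⁻¹ * (c - c') ^ 2 + z / 2 * (c + c')))⁻¹
      = 4 * g * (2 * g + z) * (2 * (c + c') + (2 * g + z) * z) /
        (4 * g * (2 * g + z) * (2 * (c + c') + (2 * g + z) * z)
          + (2 * g + z) * z * (4 * (c + c') + (2 * g + z) * z) + 2 * (c - c') ^ 2) := by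
  have hden : 4 * g * (2 * g + z) * (2 * (c + c') + (2 * g + z) * z)
      + (2 * g + z) * z * (4 * (c + c') + (2 * g + z) * z) + 2 * (c - c') ^ 2
      = (4 * g + z) * (2 * g + z) * (2 * (c + c' + (2 * g + z) * (z / 2)))
        + 2 * (c - c') ^ 2 + 2 * z * (c + c') * (2 * g + z) := by ring
  rw [hden, show 2 * (c + c') + (2 * g + z) * z = 2 * (c + c' + (2 * g + z) * (z / 2)) by ring]
  generalize c + c' + (2 * g + z) * (z / 2) = P at hP ⊢
  have hsum : 1 + 2 * (4 * g + z)⁻¹ * P⁻¹ * ((2 * (2 * g + z))⁻¹ * (c - c') ^ 2 + z / 2 * (c + c'))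
      = ((4 * g + z) * (2 * g + z) * (2 * P) + 2 * (c - c') ^ 2 + 2 * z * (c + c') * (2 * g + z))
        / ((4 * g + z) * (2 * g + z) * (2 * P)) := by
    field_simp
    ring
  rw [hsum, inv_div, mul_div_assoc']
  congr 1
  field_simp

lemma thetaM_eq_div {γ : ℝ} (hγ : 0 < γ) (θ : ℝ) (m : ℤ) {c c' : ℝ} (hc : 0 < c) (hc' : 0 < c') :
    thetaM γ θ m c c' = thetaNum γ (2 * π * m / θ) c c' / thetaDen γ (2 * π * m / θ) c c' := by
  set β : ℝ := 2 * π * m / θ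
  have hshift_ne : ∀ a : ℝ, 0 < a → (a : ℂ) + Complex.I * β ≠ 0 := fun a ha h => by
    simpa [ha.ne'] using congrArg Complex.re h
  have hP : (c : ℂ) + c' + (2 * γ + Complex.I * β) * (Complex.I * β / 2) ≠ 0 := by
    rcases eq_or_ne β 0 with hβ | hβ
    · simpa [hβ] using (Complex.ofReal_ne_zero.2 (add_pos hc hc').ne')
    · exact fun h => by simpa [hγ.ne', hβ] using congrArg Complex.im h
  unfold thetaM thetaDen thetaNum
  exact symbol_eq_div_of_ne_zero (by exact_mod_cast hshift_ne (4 * γ) (by positivity))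
    (by exact_mod_cast hshift_ne (2 * γ) (by positivity)) hP

lemma normSq_thetaDen (γ β c c' : ℝ) :
    Complex.normSq (thetaDen γ β c c') = Complex.normSq (thetaNum γ β c c')
      + (2 * (c - c') ^ 2 + β ^ 4 - 4 * (c + c') * β ^ 2) ^ 2
      + 4 * γ ^ 2 * ((16 * (c + c') - 20 * β ^ 2) * (c - c') ^ 2 + 16 * (c + c') ^ 2 * β ^ 2
          + 2 * (β ^ 2) ^ 3)
      + 16 * γ ^ 4 * β ^ 2 * (β ^ 2 + 8 * (c + c')) := by
  simp only [thetaDen, thetaNum, Complex.normSq_apply, Complex.add_re, Complex.add_im,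
    Complex.mul_re, Complex.mul_im, Complex.sub_re, Complex.sub_im, Complex.ofReal_re,
    Complex.ofReal_im, Complex.I_re, Complex.I_im, pow_two, Complex.re_ofNat, Complex.im_ofNat]
  ring

-- Affine in `d`, and nonnegative at both endpoints `d = 0` and `d = s²`.
lemma symbol_cross_term_nonneg {s t d : ℝ} (hs : 0 ≤ s) (ht : 0 ≤ t) (hd : 0 ≤ d)
    (hds : d ≤ s ^ 2) : 0 ≤ (16 * s - 20 * t) * d + 16 * s ^ 2 * t + 2 * t ^ 3 := by
  rcases le_total 0 (16 * s - 20 * t) with hk | hk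
  · have := mul_nonneg hk hd
    positivity
  · have h_end : 0 ≤ 16 * s ^ 3 - 4 * t * s ^ 2 + 2 * t ^ 3 := by
      nlinarith [mul_nonneg ht (sq_nonneg (t - 2 * s)), mul_nonneg hs (sq_nonneg (t - 2 * s))]
    nlinarith [mul_nonneg_of_nonpos_of_nonpos hk (sub_nonpos.2 hds)]

lemma normSq_thetaNum_le_normSq_thetaDen (γ β : ℝ) {c c' : ℝ} (hc : 0 ≤ c) (hc' : 0 ≤ c') :
    Complex.normSq (thetaNum γ β c c') ≤ Complex.normSq (thetaDen γ β c c') := by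
  have hcross := symbol_cross_term_nonneg (add_nonneg hc hc') (sq_nonneg β) (sq_nonneg (c - c'))
    (by nlinarith [mul_nonneg hc hc'])
  rw [normSq_thetaDen]
  have : 0 ≤ 16 * γ ^ 4 * β ^ 2 * (β ^ 2 + 8 * (c + c')) := by positivity
  nlinarith [sq_nonneg (2 * (c - c') ^ 2 + β ^ 4 - 4 * (c + c') * β ^ 2), sq_nonneg γ]

lemma norm_thetaM_le_one {γ : ℝ} (hγ : 0 < γ) (θ : ℝ) (m : ℤ) {c c' : ℝ} (hc : 0 < c)
    (hc' : 0 < c') : ‖thetaM γ θ m c c'‖ ≤ 1 := by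
  rw [thetaM_eq_div hγ θ m hc hc', norm_div]
  refine div_le_one_of_le₀ ?_ (norm_nonneg _)
  rw [← sq_le_sq₀ (norm_nonneg _) (norm_nonneg _), Complex.sq_norm, Complex.sq_norm]
  exact normSq_thetaNum_le_normSq_thetaDen γ _ hc.le hc'.le

theorem kerMC_boundary_column_bound_general (ω₀ γ θ : ℝ) (hω : 0 < ω₀) (hγ : 0 < γ) :
    ∃ M > 0, ∀ n : ℕ, 1 ≤ n → ∀ m : ℤ,
      ∑ x ∈ Finset.range (n + 1), ‖kerMC n ω₀ γ θ m x 0‖ ^ 2 ≤ M ^ 2 := by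
  refine ⟨3, by norm_num, fun n _ m => ?_⟩
  have hbound := sum_norm_sq_kernel_column_le (s := range (n + 1)) (ψ := psiN n)
    (fun a ha b hb => sum_psiN_mul_psiN (Nat.le_of_lt_succ (mem_range.1 ha))
      (Nat.le_of_lt_succ (mem_range.1 hb)))
    (by positivity) (fun j _ x => psiN_sq_le n j x)
    (fun j _ j' _ => norm_thetaM_le_one hγ θ m (muN_pos n hω j) (muN_pos n hω j')) 0
  rw [card_range, show ((n + 1 : ℕ) : ℝ) * (2 / (n + 1)) = 2 by push_cast; field_simp] at hbound
  exact hbound.trans (by norm_num)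

/-- Uniform bound on the boundary column of the Fourier-mode kernels:
there is `𝔐 > 0`, depending only on `γ, θ, ω₀`, with
`Σ_{x=0}^n |M_{x,0}(m)|² ≤ 𝔐²` for all `n ≥ 1` and all `m ∈ ℤ`. -/
theorem kerMC_boundary_column_bound (ω₀ γ θ : ℝ) (hω : 0 < ω₀) (hγ : 0 < γ) (hθ : 0 < θ) :
    ∃ M > 0, ∀ n : ℕ, 1 ≤ n → ∀ m : ℤ,
      ∑ x ∈ Finset.range (n + 1), ‖kerMC n ω₀ γ θ m x 0‖ ^ 2 ≤ M ^ 2 :=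
  kerMC_boundary_column_bound_general ω₀ γ θ hω hγ

end
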